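/- arXiv:2110.01650 — 5 statements merged into one kernel-verified Lean document; each statement's English description precedes it below -/
import Mathlib

section
/- The additive group of real numbers ℝ admits a faithful action on a countable set. -/
/-!
As a `ℚ`-vector space, `ℝ` has dimension `𝔠`, and so does `ℕ → ℚ`; hence `ℝ ≃+ (ℕ → ℚ)`.
A countable group acts faithfully on itself, and a countable product of groups acting faithfully
on countable sets acts faithfully on the disjoint union of those sets.
-/

open Cardinal

def CountablyRepresentable (G : Type) [Group G] : Prop :=
  ∃ (X : Type) (_ : Countable X) (φ : G →* Equiv.Perm X), Function.Injective φ

namespace CountablyRepresentable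

theorem of_countable (G : Type) [Group G] [Countable G] : CountablyRepresentable G :=
  ⟨G, inferInstance, MulAction.toPermHom G G, MulAction.toPerm_injective⟩

theorem of_injective {G H : Type} [Group G] [Group H] (f : G →* H) (hf : Function.Injective f)
    (hH : CountablyRepresentable H) : CountablyRepresentable G :=
  let ⟨X, hX, φ, hφ⟩ := hH
  ⟨X, hX, φ.comp f, hφ.comp hf⟩

theorem pi {ι : Type} [Countable ι] {G : ι → Type} [∀ i, Group (G i)]
    (hG : ∀ i, CountablyRepresentable (G i)) : CountablyRepresentable (∀ i, G i) := by
  choose X hX φ hφ using hG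
  exact ⟨Σ i, X i, inferInstance,
    (Equiv.Perm.sigmaCongrRightHom X).comp (MonoidHom.piMap φ),
    Equiv.Perm.sigmaCongrRightHom_injective.comp (Function.Injective.piMap hφ)⟩

end CountablyRepresentable

theorem rank_rat_nat_to_rat : Module.rank ℚ (ℕ → ℚ) = 𝔠 := by
  rw [rank_fun_infinite, mk_arrow]
  simp [aleph0_power_aleph0]

theorem Real.nonempty_linearEquiv_nat_to_rat : Nonempty (ℝ ≃ₗ[ℚ] (ℕ → ℚ)) :=
  nonempty_linearEquiv_of_rank_eq (Real.rank_rat_real.trans rank_rat_nat_to_rat.symm)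

/-- The additive group of real numbers admits a faithful action on a countable set. -/
theorem real_countably_representable :
    ∃ (X : Type) (_ : Countable X) (φ : Multiplicative ℝ →* Equiv.Perm X),
      Function.Injective φ := by
  obtain ⟨e⟩ := Real.nonempty_linearEquiv_nat_to_rat
  let f : Multiplicative ℝ ≃* (ℕ → Multiplicative ℚ) :=
    e.toAddEquiv.toMultiplicative.trans (MulEquiv.funMultiplicative ℕ ℚ)
  have : Countable (Multiplicative ℚ) := inferInstanceAs (Countable ℚ)
  have hprod : CountablyRepresentable (ℕ → Multiplicative ℚ) :=
    .pi fun _ ↦ .of_countable _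
  exact hprod.of_injective f.toMonoidHom f.injective
end

section
/- Let G be a group with center containing an element c, generated by a family {a_i, b_i : i ∈ I} ∪ {c} with I uncountable, such that all generators commute except [a_i, b_i] = c for each i ∈ I. Then for every action of G on a countable set X, the element c acts trivially on X. -/
open scoped commutatorElement

/-!
Fix `x`. Since `I` is uncountable and `X × X` countable, some three distinct indices `i, j, k`
satisfy `a i • x = a j • x = a k • x` and `b i • x = b j • x = b k • x`. Then `a j⁻¹ * a i` and
`b k⁻¹ * b i` lie in the stabilizer of `x`, and their commutator is still `c`, because the
correction factors `a j⁻¹` and `b k⁻¹` commute with everything involved except `c`, which is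
central.
-/

theorem exists_infinite_fiber_of_uncountable {α β : Type*} [Uncountable α] [Countable β]
    (f : α → β) : ∃ y, (f ⁻¹' {y}).Infinite := by
  by_contra! hfin
  have hcover : (Set.univ : Set α) = ⋃ y, f ⁻¹' {y} := by ext; simp
  have hcount : (Set.univ : Set α).Countable := by
    rw [hcover]
    exact Set.countable_iUnion fun y => (hfin y).countable
  exact not_countable (Set.countable_univ_iff.mp hcount)

theorem exists_three_ne_map_eq_of_uncountable {α β : Type*} [Uncountable α] [Countable β]
    (f : α → β) : ∃ i j k, i ≠ j ∧ i ≠ k ∧ j ≠ k ∧ f j = f i ∧ f k = f i := by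
  classical
  obtain ⟨y, hy⟩ := exists_infinite_fiber_of_uncountable f
  obtain ⟨s, hsy, hcard⟩ := hy.exists_subset_card_eq 3
  obtain ⟨i, j, k, hij, hik, hjk, hs⟩ := Finset.card_eq_three.mp hcard
  have hfiber : ∀ l ∈ s, f l = y := fun l hl => hsy hl
  rw [hs] at hfiber
  refine ⟨i, j, k, hij, hik, hjk, ?_, ?_⟩ <;> simp [hfiber]

theorem commutatorElement_inv_mul_inv_mul {G : Type*} [Group G] {a₁ a₂ b₁ b₂ : G}
    (hcenter : ⁅a₁, b₁⁆ ∈ Subgroup.center G) (h₁₂ : Commute a₁ b₂) (h₂₁ : Commute a₂ b₁)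
    (h₂₂ : Commute a₂ b₂) : ⁅a₂⁻¹ * a₁, b₂⁻¹ * b₁⁆ = ⁅a₁, b₁⁆ := by
  set z := ⁅a₁, b₁⁆
  have hz : a₁ * b₁ = z * (b₁ * a₁) := by simp only [z, commutatorElement_def]; group
  have hAB : Commute (a₂⁻¹ * b₂⁻¹) z := Subgroup.mem_center_iff.mp hcenter _
  have hswap : (a₂⁻¹ * a₁) * (b₂⁻¹ * b₁) = z * ((b₂⁻¹ * b₁) * (a₂⁻¹ * a₁)) :=
    calc (a₂⁻¹ * a₁) * (b₂⁻¹ * b₁) = a₂⁻¹ * b₂⁻¹ * (a₁ * b₁) := by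
          rw [mul_assoc, ← mul_assoc a₁, h₁₂.inv_right.eq]; group
      _ = z * (a₂⁻¹ * b₂⁻¹ * b₁ * a₁) := by rw [hz, ← mul_assoc, hAB.eq]; group
      _ = z * ((b₂⁻¹ * b₁) * (a₂⁻¹ * a₁)) := by
          rw [h₂₂.inv_inv.eq, mul_assoc b₂⁻¹, h₂₁.inv_left.eq]; group
  rw [commutatorElement_def, hswap]
  group

theorem MulAction.commutatorElement_mem_stabilizer {G X : Type*} [Group G] [MulAction G X]
    {x : X} {g h : G} (hg : g ∈ stabilizer G x) (hh : h ∈ stabilizer G x) :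
    ⁅g, h⁆ ∈ stabilizer G x :=
  commutatorElement_def g h ▸ mul_mem (mul_mem (mul_mem hg hh) (inv_mem hg)) (inv_mem hh)

theorem MulAction.inv_mul_mem_stabilizer_of_smul_eq {G X : Type*} [Group G] [MulAction G X]
    {x : X} {g h : G} (hgh : h • x = g • x) : h⁻¹ * g ∈ stabilizer G x := by
  rw [mem_stabilizer_iff, mul_smul, ← hgh, inv_smul_smul]

theorem churkin_central_element_acts_trivially_general {G : Type*} [Group G]
    {I : Type*} [Uncountable I] (a b : I → G) (c : G)
    (hc : c ∈ Subgroup.center G)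
    (hab : ∀ i j, i ≠ j → Commute (a i) (b j))
    (hrel : ∀ i, ⁅a i, b i⁆ = c)
    (X : Type*) [Countable X] [MulAction G X] :
    ∀ x : X, c • x = x := by
  intro x
  obtain ⟨i, j, k, hij, hik, hjk, hfj, hfk⟩ :=
    exists_three_ne_map_eq_of_uncountable fun l => (a l • x, b l • x)
  have hu := MulAction.inv_mul_mem_stabilizer_of_smul_eq (congrArg Prod.fst hfj)
  have hv := MulAction.inv_mul_mem_stabilizer_of_smul_eq (congrArg Prod.snd hfk)
  have hcomm : ⁅(a j)⁻¹ * a i, (b k)⁻¹ * b i⁆ = c := by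
    rw [commutatorElement_inv_mul_inv_mul (hrel i ▸ hc) (hab i k hik) (hab j i hij.symm)
      (hab j k hjk), hrel i]
  rw [← MulAction.mem_stabilizer_iff, ← hcomm]
  exact MulAction.commutatorElement_mem_stabilizer hu hv

/-- Let `G` be a group with a central element `c`, generated by a family
`{a_i, b_i : i ∈ I} ∪ {c}` with `I` uncountable, in which all generators commute except that
`⁅a i, b i⁆ = c` for each `i`.  Then in every action of `G` on a countable set, `c` acts
trivially. -/
theorem churkin_central_element_acts_trivially {G : Type*} [Group G]
    {I : Type*} [Uncountable I] (a b : I → G) (c : G)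
    (hc : c ∈ Subgroup.center G)
    (hgen : Subgroup.closure (Set.range a ∪ Set.range b ∪ {c}) = ⊤)
    (haa : ∀ i j, Commute (a i) (a j))
    (hbb : ∀ i j, Commute (b i) (b j))
    (hab : ∀ i j, i ≠ j → Commute (a i) (b j))
    (hrel : ∀ i, ⁅a i, b i⁆ = c)
    (X : Type*) [Countable X] [MulAction G X] :
    ∀ x : X, c • x = x :=
  churkin_central_element_acts_trivially_general a b c hc hab hrel X
end

section
/- Churkin's group G = ⟨a_i, b_i, c (i ∈ I) : all generators commute except [a_i, b_i] = c⟩, with I of cardinality continuum, is nilpotent of class 2, has cardinality continuum, and is not countably representable (admits no faithful action on a countable set). -/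
/-!
Modulo the central generator `c` all generators commute, so commutators are central and the group
has class two. It is a quotient of a free group on continuum many generators, and the `a i` are
pairwise distinct, so it has cardinality continuum.

Given an action on a countable set and a point `x`, uncountability of `I` yields `i ≠ j` with
`a i x = a j x` and `b i x = b j x`. Then `(a j)⁻¹ * a i` and `(b j)⁻¹ * b i` fix `x`, hence so
does their commutator, which is `c ^ 2`. Faithfulness fails because `c` has infinite order: the
group maps onto the central extension of `(I →₀ ℤ) × (I →₀ ℤ)` by `ℤ` with the bilinear cocycle
`(p, q) ↦ ∑ i, p i * q i`, sending `c` to a generator of the centre `ℤ`.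
-/

/-- Generators of Churkin's group: `a i`, `b i` for `i ∈ I`, and the central element `c`. -/
abbrev ChurkinGenerators (I : Type) := I ⊕ I ⊕ Unit

open scoped commutatorElement

/-- The relators of Churkin's presentation: all generators commute, except that
`⁅a i, b i⁆ = c` for every `i`. -/
def churkinRels (I : Type) : Set (FreeGroup (ChurkinGenerators I)) :=
  let a : I → FreeGroup (ChurkinGenerators I) := fun i => FreeGroup.of (Sum.inl i)
  let b : I → FreeGroup (ChurkinGenerators I) := fun i => FreeGroup.of (Sum.inr (Sum.inl i))
  let c : FreeGroup (ChurkinGenerators I) := FreeGroup.of (Sum.inr (Sum.inr ()))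
  {r | (∃ i j, r = ⁅a i, a j⁆) ∨ (∃ i j, r = ⁅b i, b j⁆) ∨
      (∃ i j, i ≠ j ∧ r = ⁅a i, b j⁆) ∨ (∃ i, r = ⁅a i, c⁆) ∨ (∃ i, r = ⁅b i, c⁆) ∨
      (∃ i, r = ⁅a i, b i⁆ * c⁻¹)}

/-- Churkin's group, presented by generators `a i, b i, c` (`i ∈ I`) where all generators
commute except `⁅a i, b i⁆ = c`. -/
abbrev ChurkinGroup (I : Type) := PresentedGroup (churkinRels I)

theorem commutatorElement_inv_mul_inv_mul_s15 {G : Type*} [Group G] {a a' b b' c : G}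
    (hc : c ∈ Subgroup.center G) (ha'b : Commute a' b) (hab' : Commute a b')
    (h : ⁅a, b⁆ = c) (h' : ⁅a', b'⁆ = c) :
    ⁅a'⁻¹ * a, b'⁻¹ * b⁆ = c ^ 2 := by
  have conj_c : ∀ g, g * c * g⁻¹ = c := fun g => by
    rw [Subgroup.mem_center_iff.1 hc g, mul_inv_cancel_right]
  have inv_conj_c : ∀ g, g⁻¹ * c * g = c := fun g => by simpa using conj_c g⁻¹
  have comm_one : ∀ {x y : G}, Commute x y → ⁅x, y⁆ = 1 :=
    commutatorElement_eq_one_iff_commute.2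
  have e₁ : ⁅a, b'⁻¹ * b⁆ = c := by
    rw [commutatorElement_mul_right_eq_mul_conj, comm_one hab'.inv_right, one_mul, h, conj_c]
  have e₂ : ⁅a'⁻¹, b'⁻¹⁆ = c := by
    rw [commutatorElement_inv_left, commutatorElement_inv_left, h', inv_conj_c, inv_conj_c]
  have e₃ : ⁅a'⁻¹, b'⁻¹ * b⁆ = c := by
    rw [commutatorElement_mul_right_eq_mul_conj, comm_one ha'b.inv_left, mul_one,
      mul_inv_cancel_right, e₂]
  rw [commutatorElement_mul_left_eq_conj_mul, e₁, e₃, conj_c, sq]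

theorem commute_of_closure_eq_top {G : Type*} [Group G] {S : Set G}
    (hS : Subgroup.closure S = ⊤) (hcomm : ∀ x ∈ S, ∀ y ∈ S, Commute x y) (x y : G) :
    Commute x y := by
  have hle := Subgroup.closure_le_centralizer_centralizer S
  rw [hS] at hle
  exact Set.centralizer_centralizer_comm_of_comm (fun x hx y hy => (hcomm x hx y hy).eq)
    x (hle trivial) y (hle trivial)

theorem commutator_le_center_of_closure_eq_top {G : Type*} [Group G] {S : Set G}
    (hS : Subgroup.closure S = ⊤) (hcomm : ∀ x ∈ S, ∀ y ∈ S, ⁅x, y⁆ ∈ Subgroup.center G) :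
    commutator G ≤ Subgroup.center G := by
  let π := QuotientGroup.mk' (Subgroup.center G)
  have hπS : Subgroup.closure (π '' S) = ⊤ := by
    rw [← MonoidHom.map_closure, hS, ← MonoidHom.range_eq_map,
      MonoidHom.range_eq_top.2 (QuotientGroup.mk'_surjective _)]
  rw [commutator_def, Subgroup.commutator_le]
  intro g _ h _
  refine (QuotientGroup.eq_one_iff _).1 ?_
  change π ⁅g, h⁆ = 1
  rw [map_commutatorElement, commutatorElement_eq_one_iff_commute]
  refine commute_of_closure_eq_top hπS ?_ _ _
  rintro _ ⟨x, hx, rfl⟩ _ ⟨y, hy, rfl⟩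
  rw [← commutatorElement_eq_one_iff_commute, ← map_commutatorElement]
  exact (QuotientGroup.eq_one_iff _).2 (hcomm x hx y hy)

theorem Subgroup.top_lowerCentralSeries_two_eq_bot_iff {G : Type*} [Group G] :
    (⊤ : Subgroup G).lowerCentralSeries 2 = ⊥ ↔ _root_.commutator G ≤ center G := by
  rw [lowerCentralSeries_succ, top_lowerCentralSeries_one, commutator_eq_bot_iff_le_centralizer,
    coe_top, centralizer_univ]

/-- `⟨z, p, q⟩` stands for `c ^ z * b ^ q * a ^ p`, where `⁅a ^ p, b ^ q⁆ = c ^ β p q`. -/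
@[ext]
structure Heisenberg {A B C : Type*} [AddCommGroup A] [AddCommGroup B] [AddCommGroup C]
    (β : A →+ B →+ C) where
  z : C
  p : A
  q : B

namespace Heisenberg

variable {A B C : Type*} [AddCommGroup A] [AddCommGroup B] [AddCommGroup C] {β : A →+ B →+ C}

instance : One (Heisenberg β) := ⟨⟨0, 0, 0⟩⟩
instance : Mul (Heisenberg β) := ⟨fun g h => ⟨g.z + h.z + β g.p h.q, g.p + h.p, g.q + h.q⟩⟩
instance : Inv (Heisenberg β) := ⟨fun g => ⟨-g.z + β g.p g.q, -g.p, -g.q⟩⟩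

@[simp] lemma one_z : (1 : Heisenberg β).z = 0 := rfl
@[simp] lemma one_p : (1 : Heisenberg β).p = 0 := rfl
@[simp] lemma one_q : (1 : Heisenberg β).q = 0 := rfl
@[simp] lemma mul_z (g h : Heisenberg β) : (g * h).z = g.z + h.z + β g.p h.q := rfl
@[simp] lemma mul_p (g h : Heisenberg β) : (g * h).p = g.p + h.p := rfl
@[simp] lemma mul_q (g h : Heisenberg β) : (g * h).q = g.q + h.q := rfl
@[simp] lemma inv_z (g : Heisenberg β) : g⁻¹.z = -g.z + β g.p g.q := rfl
@[simp] lemma inv_p (g : Heisenberg β) : g⁻¹.p = -g.p := rfl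
@[simp] lemma inv_q (g : Heisenberg β) : g⁻¹.q = -g.q := rfl

instance : Group (Heisenberg β) where
  mul_assoc _ _ _ := by ext <;> simp <;> abel
  one_mul _ := by ext <;> simp
  mul_one _ := by ext <;> simp
  inv_mul_cancel _ := by ext <;> simp

lemma commutatorElement_eq (g h : Heisenberg β) :
    ⁅g, h⁆ = ⟨β g.p h.q - β h.p g.q, 0, 0⟩ := by
  ext <;> simp [commutatorElement_def]
  abel

lemma mk_zero_zero_pow (z : C) (n : ℕ) :
    (⟨z, 0, 0⟩ : Heisenberg β) ^ n = ⟨n • z, 0, 0⟩ := by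
  induction n with
  | zero => ext <;> simp
  | succ n ih => ext <;> simp [pow_succ, ih, succ_nsmul]

end Heisenberg

namespace Churkin

variable {I : Type}

def a (i : I) : ChurkinGroup I := PresentedGroup.of (Sum.inl i)
def b (i : I) : ChurkinGroup I := PresentedGroup.of (Sum.inr (Sum.inl i))
variable (I) in
def c : ChurkinGroup I := PresentedGroup.of (Sum.inr (Sum.inr ()))

lemma commute_of_commutatorElement_mem {x y : ChurkinGenerators I}
    (h : ⁅FreeGroup.of x, FreeGroup.of y⁆ ∈ churkinRels I) :
    Commute (PresentedGroup.of (rels := churkinRels I) x) (PresentedGroup.of y) := by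
  have h1 := PresentedGroup.one_of_mem h
  rwa [map_commutatorElement, commutatorElement_eq_one_iff_commute] at h1

lemma commute_a_a (i j : I) : Commute (a i) (a j) :=
  commute_of_commutatorElement_mem (Or.inl ⟨i, j, rfl⟩)

lemma commute_b_b (i j : I) : Commute (b i) (b j) :=
  commute_of_commutatorElement_mem (Or.inr <| Or.inl ⟨i, j, rfl⟩)

lemma commute_a_b {i j : I} (hij : i ≠ j) : Commute (a i) (b j) :=
  commute_of_commutatorElement_mem (Or.inr <| Or.inr <| Or.inl ⟨i, j, hij, rfl⟩)

lemma commute_a_c (i : I) : Commute (a i) (c I) :=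
  commute_of_commutatorElement_mem (Or.inr <| Or.inr <| Or.inr <| Or.inl ⟨i, rfl⟩)

lemma commute_b_c (i : I) : Commute (b i) (c I) :=
  commute_of_commutatorElement_mem (Or.inr <| Or.inr <| Or.inr <| Or.inr <| Or.inl ⟨i, rfl⟩)

lemma commutatorElement_a_b (i : I) : ⁅a i, b i⁆ = c I := by
  have hrel : ⁅FreeGroup.of (Sum.inl i), FreeGroup.of (Sum.inr (Sum.inl i))⁆ *
      (FreeGroup.of (Sum.inr (Sum.inr ())))⁻¹ ∈ churkinRels I :=
    Or.inr <| Or.inr <| Or.inr <| Or.inr <| Or.inr ⟨i, rfl⟩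
  have h := PresentedGroup.one_of_mem hrel
  rwa [map_mul, map_inv, map_commutatorElement, mul_inv_eq_one] at h

lemma c_mem_center : c I ∈ Subgroup.center (ChurkinGroup I) := by
  rw [← Subgroup.centralizer_univ, ← Subgroup.coe_top, ← PresentedGroup.closure_range_of,
    Subgroup.centralizer_closure, Subgroup.mem_centralizer_iff]
  rintro _ ⟨x | i | u, rfl⟩
  · exact (commute_a_c x).eq
  · exact (commute_b_c i).eq
  · rfl

lemma commutatorElement_of_of_mem_center (x y : ChurkinGenerators I) :
    ⁅(PresentedGroup.of x : ChurkinGroup I), (PresentedGroup.of y : ChurkinGroup I)⁆ ∈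
      Subgroup.center _ := by
  have of_commute {g h : ChurkinGroup I} (hgh : Commute g h) : ⁅g, h⁆ ∈ Subgroup.center _ := by
    rw [commutatorElement_eq_one_iff_commute.2 hgh]
    exact one_mem _
  have commute_c (g : ChurkinGroup I) : Commute g (c I) := Subgroup.mem_center_iff.1 c_mem_center g
  have a_b (i j : I) : ⁅a i, b j⁆ ∈ Subgroup.center _ := by
    rcases eq_or_ne i j with rfl | hij
    · exact commutatorElement_a_b i ▸ c_mem_center
    · exact of_commute (commute_a_b hij)
  rcases x with i | i | ⟨⟩ <;> rcases y with j | j | ⟨⟩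
  · exact of_commute (commute_a_a i j)
  · exact a_b i j
  · exact of_commute (commute_c _)
  · exact commutatorElement_inv (a j) (b i) ▸ inv_mem (a_b j i)
  · exact of_commute (commute_b_b i j)
  · exact of_commute (commute_c _)
  · exact of_commute (commute_c _).symm
  · exact of_commute (commute_c _).symm
  · exact of_commute (Commute.refl _)

lemma commutator_le_center : commutator (ChurkinGroup I) ≤ Subgroup.center _ := by
  refine commutator_le_center_of_closure_eq_top (PresentedGroup.closure_range_of _) ?_
  rintro _ ⟨x, rfl⟩ _ ⟨y, rfl⟩
  exact commutatorElement_of_of_mem_center x y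

noncomputable def pairing : (I →₀ ℤ) →+ (I →₀ ℤ) →+ ℤ :=
  Finsupp.liftAddHom fun i => zmultiplesHom _ (Finsupp.applyAddHom i)

@[simp] lemma pairing_single_one (i : I) (q : I →₀ ℤ) :
    pairing (Finsupp.single i 1) q = q i := by
  simp [pairing]

noncomputable def heisenbergGen : ChurkinGenerators I → Heisenberg (pairing (I := I))
  | .inl i => ⟨0, Finsupp.single i 1, 0⟩
  | .inr (.inl i) => ⟨0, 0, Finsupp.single i 1⟩
  | .inr (.inr _) => ⟨1, 0, 0⟩

lemma heisenbergGen_rels : ∀ r ∈ churkinRels I, FreeGroup.lift heisenbergGen r = 1 := by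
  rintro r (⟨i, j, rfl⟩ | ⟨i, j, rfl⟩ | ⟨i, j, hij, rfl⟩ | ⟨i, rfl⟩ | ⟨i, rfl⟩ | ⟨i, rfl⟩) <;>
    ext <;> simp [Heisenberg.commutatorElement_eq, heisenbergGen]
  exact Finsupp.single_eq_of_ne hij

noncomputable def toHeisenberg : ChurkinGroup I →* Heisenberg (pairing (I := I)) :=
  PresentedGroup.toGroup heisenbergGen_rels

lemma c_pow_ne_one {n : ℕ} (hn : n ≠ 0) : c I ^ n ≠ 1 := by
  intro h
  have hz := congrArg (fun g => (toHeisenberg g).z) h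
  simp [toHeisenberg, c, PresentedGroup.toGroup.of, heisenbergGen, Heisenberg.mk_zero_zero_pow]
    at hz
  exact hn hz

lemma a_injective : Function.Injective (a : I → ChurkinGroup I) := by
  intro i j h
  have hp := congrArg (fun g => (toHeisenberg g).p) h
  simpa [toHeisenberg, a, PresentedGroup.toGroup.of, heisenbergGen,
    Finsupp.single_left_inj] using hp

lemma lowerCentralSeries_one_ne_bot [Nonempty I] :
    (⊤ : Subgroup (ChurkinGroup I)).lowerCentralSeries 1 ≠ ⊥ := by
  obtain ⟨i⟩ := ‹Nonempty I›
  have hc : c I ∈ (⊤ : Subgroup (ChurkinGroup I)).lowerCentralSeries 1 := by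
    rw [Subgroup.top_lowerCentralSeries_one, ← commutatorElement_a_b i]
    exact Subgroup.commutator_mem_commutator (Subgroup.mem_top _) (Subgroup.mem_top _)
  intro h
  rw [h, Subgroup.mem_bot] at hc
  exact c_pow_ne_one one_ne_zero (pow_one (c I) ▸ hc)

lemma mk_churkinGroup [Infinite I] : Cardinal.mk (ChurkinGroup I) = Cardinal.mk I := by
  refine le_antisymm ?_ (Cardinal.mk_le_of_injective a_injective)
  calc Cardinal.mk (ChurkinGroup I)
      ≤ Cardinal.mk (FreeGroup (ChurkinGenerators I)) :=
        Cardinal.mk_le_of_surjective (PresentedGroup.mk_surjective _)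
    _ = Cardinal.mk I := by simp [Cardinal.mk_freeGroup]

theorem map_c_sq_eq_one [Uncountable I] {X : Type*} [Countable X]
    (φ : ChurkinGroup I →* Equiv.Perm X) : φ (c I ^ 2) = 1 := by
  ext x
  obtain ⟨i, j, hxij, hij⟩ := Function.not_injective_iff.1 <|
    not_injective_uncountable_countable fun i => (φ (a i) x, φ (b i) x)
  obtain ⟨ha, hb⟩ : φ (a i) x = φ (a j) x ∧ φ (b i) x = φ (b j) x := Prod.ext_iff.1 hxij
  let H := (MulAction.stabilizer (Equiv.Perm X) x).comap φ
  have mem_H (g : ChurkinGroup I) : g ∈ H ↔ φ g x = x := Iff.rfl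
  have hu : (a j)⁻¹ * a i ∈ H := by
    rw [mem_H, map_mul, map_inv, Equiv.Perm.mul_apply, ha, Equiv.Perm.inv_eq_iff_eq]
  have hv : (b j)⁻¹ * b i ∈ H := by
    rw [mem_H, map_mul, map_inv, Equiv.Perm.mul_apply, hb, Equiv.Perm.inv_eq_iff_eq]
  rw [← commutatorElement_inv_mul_inv_mul_s15 c_mem_center (commute_a_b hij.symm) (commute_a_b hij)
    (commutatorElement_a_b i) (commutatorElement_a_b j), commutatorElement_def]
  exact mul_mem (mul_mem (mul_mem hu hv) (inv_mem hu)) (inv_mem hv)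

theorem not_injective_of_countable [Uncountable I] {X : Type*} [Countable X]
    (φ : ChurkinGroup I →* Equiv.Perm X) : ¬ Function.Injective φ := fun hφ =>
  c_pow_ne_one two_ne_zero <| hφ <| by rw [map_c_sq_eq_one, map_one]

end Churkin

open Churkin in
/-- Churkin's group, with an index set `I` of cardinality continuum, is nilpotent of
class exactly `2`, has cardinality continuum, and is not countably representable. -/
theorem churkinGroup_nilpotent_continuum_not_countably_representable
    (I : Type) (hI : Cardinal.mk I = Cardinal.continuum) :
    Group.IsNilpotent (ChurkinGroup I) ∧
    Subgroup.lowerCentralSeries (⊤ : Subgroup (ChurkinGroup I)) 2 = ⊥ ∧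
    Subgroup.lowerCentralSeries (⊤ : Subgroup (ChurkinGroup I)) 1 ≠ ⊥ ∧
    Cardinal.mk (ChurkinGroup I) = Cardinal.continuum ∧
    ¬ ∃ (X : Type) (_ : Countable X) (φ : ChurkinGroup I →* Equiv.Perm X),
        Function.Injective φ := by
  have : Uncountable I := Cardinal.aleph0_lt_mk_iff.1 (hI ▸ Cardinal.aleph0_lt_continuum)
  have class_two := Subgroup.top_lowerCentralSeries_two_eq_bot_iff.2 
    (commutator_le_center (I := I))
  refine ⟨Subgroup.nilpotent_iff_lowerCentralSeries.2 ⟨2, class_two⟩, class_two,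
    lowerCentralSeries_one_ne_bot, mk_churkinGroup.trans hI, ?_⟩
  rintro ⟨X, _, φ, hφ⟩
  exact not_injective_of_countable φ hφ
end

section
/- Let G be Churkin's group with central generator c and let π : G → H be a homomorphism to a separable Hausdorff topological group H. Then π(c) = 1. -/
/-!
Since `I` is uncountable and `H × H` is separable, for every neighbourhood `W` of `1` there are
three distinct indices `i, j, k` with `π (a i) / π (a j)` and `π (b i) / π (b k)` both in `W`:
approximate each pair `(π (a i), π (b i))` by a point of a countable dense set and use the
pigeonhole principle. Since `a j` commutes with `b i`, `b k` and `a i` commutes with `b k`,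
`c = ⁅a i, b i⁆ = ⁅a i / a j, b i / b k⁆`, so `π c` is a commutator of two elements close to `1`.
Hence `π c` lies in every neighbourhood of `1`, and `π c = 1` as `H` is Hausdorff.
-/

open Topology Filter

open scoped commutatorElement

theorem commutatorElement_div_div_of_commute {G : Type*} [Group G] {x y u v : G}
    (hyu : Commute y u) (hyv : Commute y v) (hxv : Commute x v) :
    ⁅x / y, u / v⁆ = ⁅x, u⁆ := by
  have hy : ⁅y⁻¹, u * v⁻¹⁆ = 1 :=
    commutatorElement_eq_one_iff_commute.mpr (hyu.mul_right hyv.inv_right).inv_left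
  have hv : ⁅x, v⁻¹⁆ = 1 := commutatorElement_eq_one_iff_commute.mpr hxv.inv_right
  rw [div_eq_mul_inv, div_eq_mul_inv, commutatorElement_mul_left_eq_conj_mul, hy,
    commutatorElement_mul_right_eq_mul_conj, hv]
  group

theorem exists_infinite_fiber_of_countable {α β : Type*} [Uncountable α] [Countable β]
    (f : α → β) : ∃ b, (f ⁻¹' {b}).Infinite := by
  by_contra! hfin
  have : (⋃ b, f ⁻¹' {b}).Countable := Set.countable_iUnion fun b => (hfin b).countable
  rw [← Set.preimage_iUnion, Set.iUnion_of_singleton, Set.preimage_univ] at this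
  exact not_countable (Set.countable_univ_iff.mp this)

section TopologicalGroup

variable {K : Type*} [Group K] [TopologicalSpace K] [IsTopologicalGroup K]

theorem exists_nhds_one_commutatorElement_mem {U : Set K} (hU : U ∈ 𝓝 1) :
    ∃ V ∈ 𝓝 (1 : K), ∀ x ∈ V, ∀ y ∈ V, ⁅x, y⁆ ∈ U := by
  have : (fun p : K × K => ⁅p.1, p.2⁆) ⁻¹' U ∈ 𝓝 ((1, 1) : K × K) := by
    simp only [commutatorElement_def]
    exact ((continuousAt_fst.mul continuousAt_snd).mul continuousAt_fst.inv).mul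
      continuousAt_snd.inv (by simpa using hU)
  simpa only [nhds_prod_eq, mem_prod_self_iff, Set.prod_subset_iff, Set.mem_preimage] using this

theorem exists_natEmbedding_div_mem [TopologicalSpace.SeparableSpace K] {I : Type*}
    [Uncountable I] (f : I → K) {W : Set K} (hW : W ∈ 𝓝 1) :
    ∃ e : ℕ ↪ I, ∀ m n, f (e m) / f (e n) ∈ W := by
  obtain ⟨V, hV, hVW⟩ := exists_nhds_split_inv hW
  have hnear : ∀ x : K, ∃ n, x / TopologicalSpace.denseSeq K n ∈ V := fun x =>
    (TopologicalSpace.denseRange_denseSeq K).mem_nhds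
      ((continuous_const.div' continuous_id).continuousAt.preimage_mem_nhds
        (by simpa using hV) : {y | x / y ∈ V} ∈ 𝓝 x)
  choose ν hν using fun i => hnear (f i)
  obtain ⟨n, hn⟩ := exists_infinite_fiber_of_countable ν
  refine ⟨(Set.Infinite.natEmbedding _ hn).trans (Function.Embedding.subtype _), fun p q => ?_⟩
  set i := (Set.Infinite.natEmbedding _ hn p : I)
  set j := (Set.Infinite.natEmbedding _ hn q : I)
  have hi : ν i = n := (Set.Infinite.natEmbedding _ hn p).2
  have hj : ν j = n := (Set.Infinite.natEmbedding _ hn q).2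
  have := hVW _ (hν i) _ (hν j)
  rwa [hi, hj, div_div_div_cancel_right] at this

end TopologicalGroup

theorem churkin_central_element_dies_in_separable_group_general {G : Type*} [Group G]
    {I : Type*} (hI : Cardinal.mk I = Cardinal.continuum) (a b : I → G) (c : G)
    (hab : ∀ i j, i ≠ j → Commute (a i) (b j))
    (hrel : ∀ i, ⁅a i, b i⁆ = c)
    {H : Type*} [Group H] [TopologicalSpace H] [IsTopologicalGroup H] [T2Space H]
    [TopologicalSpace.SeparableSpace H]
    (π : G →* H) :
    π c = 1 := by
  have : Uncountable I := Cardinal.aleph0_lt_mk_iff.mp (hI ▸ Cardinal.aleph0_lt_continuum)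
  have hnear : ∀ U ∈ 𝓝 (1 : H), π c ∈ U := by
    intro U hU
    obtain ⟨V, hV, hVU⟩ := exists_nhds_one_commutatorElement_mem hU
    have hVV : V ×ˢ V ∈ 𝓝 (1 : H × H) := prod_mem_nhds hV hV
    obtain ⟨e, he⟩ := exists_natEmbedding_div_mem (fun i => (π (a i), π (b i))) hVV
    have hne : ∀ {m n : ℕ}, m ≠ n → e m ≠ e n := e.injective.ne
    have hc : ⁅a (e 0) / a (e 1), b (e 0) / b (e 2)⁆ = c := by
      rw [commutatorElement_div_div_of_commute (hab _ _ (hne (by decide)))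
        (hab _ _ (hne (by decide))) (hab _ _ (hne (by decide))), hrel]
    rw [← hc, map_commutatorElement, map_div, map_div]
    exact hVU _ (he 0 1).1 _ (he 0 2).2
  exact (specializes_iff_pure.mpr (pure_le_iff.mpr hnear)).eq

/-- Let `G` be Churkin's group with central generator `c` (index set of cardinality
continuum) and let `π : G → H` be a homomorphism to a separable Hausdorff topological
group `H`.  Then `π c = 1`. -/
theorem churkin_central_element_dies_in_separable_group {G : Type*} [Group G]
    {I : Type*} (hI : Cardinal.mk I = Cardinal.continuum) (a b : I → G) (c : G)
    (hc : c ∈ Subgroup.center G)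
    (hgen : Subgroup.closure (Set.range a ∪ Set.range b ∪ {c}) = ⊤)
    (haa : ∀ i j, Commute (a i) (a j))
    (hbb : ∀ i j, Commute (b i) (b j))
    (hab : ∀ i j, i ≠ j → Commute (a i) (b j))
    (hrel : ∀ i, ⁅a i, b i⁆ = c)
    {H : Type*} [Group H] [TopologicalSpace H] [IsTopologicalGroup H] [T2Space H]
    [TopologicalSpace.SeparableSpace H]
    (π : G →* H) :
    π c = 1 :=
  churkin_central_element_dies_in_separable_group_general hI a b c hab hrel π
end

section
/- A direct sum of at most 2^ℵ₀ copies of the Prüfer group ℤ(p^∞) embeds into the countable direct power ℤ(p^∞)^ℕ; consequently it admits a faithful action on a countable set. -/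
/-!
The sets of finite prefixes of distinct infinite binary sequences meet in only finitely many
words, so they form an almost disjoint family of `2 ^ ℵ₀` infinite subsets of the countable set
`List Bool`. Sending the `i`-th copy of `G` to constant functions on the `i`-th of these sets
embeds `ι →₀ G` into `List Bool → G ≃ ℕ → G` for any abelian group `G`: a nonzero element is
detected at a prefix of its `i`-th branch lying outside the finitely many other branches of its
support. A subgroup of `ℕ → G` acts faithfully on the countable set `ℕ × G` by translating the
fibres, which gives the permutation representation.
-/

open Function

namespace Finsupp

variable {ι T G : Type*}

noncomputable def indicatorSum [AddCommMonoid G] (S : ι → Set T) : (ι →₀ G) →+ (T → G) :=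
  liftAddHom fun i =>
    { toFun := fun x => (S i).indicator fun _ => x
      map_zero' := Set.indicator_zero _ _
      map_add' := fun _ _ => Set.indicator_add _ _ _ }

theorem indicatorSum_apply [AddCommMonoid G] (S : ι → Set T) (v : ι →₀ G) (t : T) :
    indicatorSum S v t = v.sum fun i x => (S i).indicator (fun _ => x) t := by
  simp only [indicatorSum, liftAddHom_apply, AddMonoidHom.coe_mk, ZeroHom.coe_mk, Finsupp.sum,
    Finset.sum_apply]

theorem indicatorSum_injective [AddCommGroup G] {S : ι → Set T}
    (hS : ∀ i (F : Finset ι), i ∉ F → ∃ t ∈ S i, ∀ j ∈ F, t ∉ S j) :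
    Injective (indicatorSum (G := G) S) := by
  classical
  refine (injective_iff_map_eq_zero _).2 fun v hv => ?_
  by_contra hne
  obtain ⟨i, hi⟩ := Finsupp.ne_iff.1 hne
  obtain ⟨t, hti, htF⟩ := hS i (v.support.erase i) (Finset.notMem_erase i _)
  have hvt : indicatorSum S v t = v i := by
    rw [indicatorSum_apply, Finsupp.sum, Finset.sum_eq_single i]
    · simp [hti]
    · intro j hj hji
      simp [htF j (Finset.mem_erase.2 ⟨hji, hj⟩)]
    · intro h
      simp [Finsupp.notMem_support_iff.1 h]
  exact hi (hvt ▸ congrFun hv t)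

end Finsupp

theorem Set.exists_mem_forall_notMem_of_infinite_of_inter_finite {ι T : Type*} {S : ι → Set T}
    (hinf : ∀ i, (S i).Infinite) (hfin : Pairwise fun i j => (S i ∩ S j).Finite)
    (i : ι) (F : Finset ι) (hi : i ∉ F) : ∃ t ∈ S i, ∀ j ∈ F, t ∉ S j := by
  have hF : (⋃ j ∈ F, S i ∩ S j).Finite :=
    F.finite_toSet.biUnion fun j hj => hfin fun h => hi (h ▸ hj)
  obtain ⟨t, hti, htF⟩ := ((hinf i).sdiff hF).nonempty
  simp only [Set.mem_iUnion, not_exists] at htF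
  exact ⟨t, hti, fun j hj htj => htF j hj ⟨hti, htj⟩⟩

namespace Stream'

variable {α : Type*}

def prefixes (s : Stream' α) : Set (List α) := Set.range (take · s)

theorem prefixes_infinite (s : Stream' α) : s.prefixes.Infinite :=
  Set.infinite_range_of_injective fun m n h => by
    simpa only [length_take] using congrArg List.length h

theorem prefixes_inter_finite {s t : Stream' α} (h : s ≠ t) :
    (s.prefixes ∩ t.prefixes).Finite := by
  obtain ⟨k, hk⟩ := Function.ne_iff.1 h
  refine ((Set.finite_Iic k).image (take · s)).subset ?_
  rintro _ ⟨⟨n, rfl⟩, m, hmn⟩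
  have hm : m = n := by simpa only [length_take] using congrArg List.length hmn
  subst hm
  refine ⟨m, Set.mem_Iic.2 (not_lt.1 fun hkm => hk ?_), rfl⟩
  have hget := congrArg (·[k]?) hmn
  simp only [getElem?_take hkm, Option.some.injEq] at hget
  exact hget.symm

end Stream'

open Cardinal in
theorem exists_injective_finsupp_to_pi_nat (G : Type*) [AddCommGroup G] {ι : Type}
    (hι : #ι ≤ 𝔠) : ∃ φ : (ι →₀ G) →+ (ℕ → G), Injective φ := by
  obtain ⟨f⟩ : Nonempty (ι ↪ Stream' Bool) := by
    rwa [← Cardinal.le_def, show #(Stream' Bool) = 𝔠 by simp [Stream']]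
  have hφ : Injective (Finsupp.indicatorSum (G := G) fun i => (f i).prefixes) :=
    Finsupp.indicatorSum_injective <|
      Set.exists_mem_forall_notMem_of_infinite_of_inter_finite (fun i => (f i).prefixes_infinite)
        fun _ _ hij => Stream'.prefixes_inter_finite (f.injective.ne hij)
  have : Denumerable (List Bool) := .ofEncodableOfInfinite _
  let e : (List Bool → G) ≃+ (ℕ → G) := .arrowCongr (Denumerable.eqv (List Bool)) (.refl G)
  exact ⟨e.toAddMonoidHom.comp (Finsupp.indicatorSum _), e.injective.comp hφ⟩

def translatePerm (T G : Type*) [AddGroup G] : Multiplicative (T → G) →* Equiv.Perm (T × G) where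
  toFun v := Equiv.prodShear (Equiv.refl T) fun t => Equiv.addLeft (v.toAdd t)
  map_one' := by ext <;> simp
  map_mul' _ _ := by ext <;> simp

theorem translatePerm_injective (T G : Type*) [AddGroup G] : Injective (translatePerm T G) :=
  fun _ _ h => Multiplicative.toAdd.injective <| funext fun t => by
    simpa [translatePerm] using congrArg (fun σ : Equiv.Perm (T × G) => (σ (t, 0)).2) h

theorem pruefer_direct_sum_embeds_and_representable_general (p : ℕ)
    (ι : Type) (hι : Cardinal.mk ι ≤ Cardinal.continuum) :
    (∃ φ : (ι →₀ AddCommGroup.primaryComponent (ℚ ⧸ AddSubgroup.zmultiples (1 : ℚ)) p) →+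
        (ℕ → AddCommGroup.primaryComponent (ℚ ⧸ AddSubgroup.zmultiples (1 : ℚ)) p),
      Function.Injective φ) ∧
    ∃ (X : Type) (_ : Countable X)
      (ψ : Multiplicative
          (ι →₀ AddCommGroup.primaryComponent (ℚ ⧸ AddSubgroup.zmultiples (1 : ℚ)) p) →*
        Equiv.Perm X),
      Function.Injective ψ := by
  set G := AddCommGroup.primaryComponent (ℚ ⧸ AddSubgroup.zmultiples (1 : ℚ)) p
  obtain ⟨φ, hφ⟩ := exists_injective_finsupp_to_pi_nat G hι
  have : Countable (ℚ ⧸ AddSubgroup.zmultiples (1 : ℚ)) := Quotient.countable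
  refine ⟨⟨φ, hφ⟩, ℕ × G, inferInstance, (translatePerm ℕ G).comp φ.toMultiplicative,
    (translatePerm_injective ℕ G).comp hφ⟩

/-- A direct sum of at most `2 ^ ℵ₀` copies of the Prüfer group `ℤ(p^∞)` (realised as the
`p`-primary component of `ℚ/ℤ`) embeds into the countable direct power `ℤ(p^∞)^ℕ`;
consequently it admits a faithful action on a countable set. -/
theorem pruefer_direct_sum_embeds_and_representable (p : ℕ) [Fact p.Prime]
    (ι : Type) (hι : Cardinal.mk ι ≤ Cardinal.continuum) :
    (∃ φ : (ι →₀ AddCommGroup.primaryComponent (ℚ ⧸ AddSubgroup.zmultiples (1 : ℚ)) p) →+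
        (ℕ → AddCommGroup.primaryComponent (ℚ ⧸ AddSubgroup.zmultiples (1 : ℚ)) p),
      Function.Injective φ) ∧
    ∃ (X : Type) (_ : Countable X)
      (ψ : Multiplicative
          (ι →₀ AddCommGroup.primaryComponent (ℚ ⧸ AddSubgroup.zmultiples (1 : ℚ)) p) →*
        Equiv.Perm X),
      Function.Injective ψ :=
  pruefer_direct_sum_embeds_and_representable_general p ι hι
end
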